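/- arXiv:1802.10064 — 3 statements merged into one kernel-verified Lean document; each statement's English description precedes it below -/
import Mathlib

section
/- Let n ≥ 1, let R be a commutative ring, and let U be the universal enveloping algebra of the Lie algebra M_{2n}(R) (with bracket [x,y] = xy − yx), with canonical Lie algebra map ι_U : M_{2n}(R) → U. Let A₁ be the R-subalgebra of U generated by the elements ι_U(ι(h₁,h₂)) for h₁, h₂ ∈ M_n(R), and let A₂ be the R-subalgebra of U generated by the elements ι_U(ξ·L·ξ^{-1}) for L ∈ M_{2n}(R) lower triangular. Then every element of U lies in the R-linear span of the products a·b with a ∈ A₁ and b ∈ A₂; in symbols, U(gl_{2n}) = U(h)·U(ξ b⁻ ξ^{-1}). -/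
/-!
Every matrix `M = [[A, B], [C, D]]` splits as `ι(D₁, D₂) + ξ L ξ⁻¹` with `L` lower triangular:
the equation forces the diagonal blocks of `L` to be `A - C - D₁` and `w (A + B - D₁) w`, and
`D₁` can be chosen entrywise to make both lower triangular.

No Poincaré–Birkhoff–Witt theorem is needed to pass to the enveloping algebra. If `𝔤 = T₁ + T₂`,
let `Aᵢ` be the subalgebra generated by `ι(Tᵢ)`. The commutation relation
`ι x · ι h = ι h · ι x + ι ⁅x, h⁆` shows by induction on `a ∈ A₁` that
`ι x · a ∈ A₁ · (R + ι(T₂))`. Hence `A₁ · A₂` is stable under left multiplication by the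
generators `ι x`, so it is a left ideal containing `1`, i.e. everything.
-/

open Matrix

attribute [local instance 100] LieRing.ofAssociativeRing

/-- The `n × n` antidiagonal permutation matrix `w_n`, with `(i,j)` entry `δ_{i, n+1-j}`. -/
def wMat (n : ℕ) (R : Type*) [CommRing R] : Matrix (Fin n) (Fin n) R :=
  fun i j => if (i : ℕ) + (j : ℕ) + 1 = n then 1 else 0

/-- The block diagonal matrix `ι(A, D) = [[A, 0], [0, D]]`. -/
def iotaBlk {n : ℕ} {R : Type*} [CommRing R] (A D : Matrix (Fin n) (Fin n) R) :
    Matrix (Fin n ⊕ Fin n) (Fin n ⊕ Fin n) R :=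
  Matrix.fromBlocks A 0 0 D

/-- The matrix `ξ = [[1_n, w_n], [0_n, w_n]]`. -/
def xiMat (n : ℕ) (R : Type*) [CommRing R] : Matrix (Fin n ⊕ Fin n) (Fin n ⊕ Fin n) R :=
  Matrix.fromBlocks 1 (wMat n R) 0 (wMat n R)

/-- The matrix `ξ⁻¹ = [[1_n, -1_n], [0_n, w_n]]`. -/
def xiInvMat (n : ℕ) (R : Type*) [CommRing R] : Matrix (Fin n ⊕ Fin n) (Fin n ⊕ Fin n) R :=
  Matrix.fromBlocks 1 (-1) 0 (wMat n R)

open scoped Pointwise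

namespace UniversalEnvelopingAlgebra

variable {R L : Type*} [CommRing R] [LieRing L] [LieAlgebra R L]

variable (R L) in
theorem adjoin_range_ι : Algebra.adjoin R (Set.range (ι R (L := L))) = ⊤ := by
  have : Set.range (ι R (L := L)) = mkAlgHom R L '' Set.range (TensorAlgebra.ι R) := by
    rw [← Set.range_comp]; rfl
  rw [this, Algebra.adjoin_image, TensorAlgebra.adjoin_range_ι, Algebra.map_top,
    AlgHom.range_eq_top]
  exact RingCon.mkₐ_surjective _

theorem ι_mul_ι (x y : L) : ι R x * ι R y = ι R y * ι R x + ι R ⁅x, y⁆ := by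
  rw [LieHom.map_lie, Ring.lie_def]
  abel

theorem mul_mem_of_forall_ι_mul_mem {V : Submodule R (UniversalEnvelopingAlgebra R L)}
    (hV : ∀ x, ∀ v ∈ V, ι R x * v ∈ V) (u : UniversalEnvelopingAlgebra R L) {v}
    (hv : v ∈ V) : u * v ∈ V := by
  have hu : u ∈ Algebra.adjoin R (Set.range (ι R (L := L))) := by
    rw [adjoin_range_ι]; trivial
  induction hu using Algebra.adjoin_induction generalizing v with
  | mem _ hx => obtain ⟨x, rfl⟩ := hx; exact hV x v hv
  | algebraMap r => rw [← Algebra.smul_def]; exact V.smul_mem r hv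
  | add _ _ _ _ hx hy => rw [add_mul]; exact V.add_mem (hx hv) (hy hv)
  | mul _ _ _ _ hx hy => rw [mul_assoc]; exact hx (hy hv)

section
variable {T₁ T₂ : Set L}

theorem ι_mem_adjoin_mul_span (h : T₁ + T₂ = Set.univ) (x : L) :
    ι R x ∈ Subalgebra.toSubmodule (Algebra.adjoin R (ι R '' T₁)) *
      Submodule.span R (insert 1 (ι R '' T₂)) := by
  obtain ⟨a, ha, b, hb, rfl⟩ := Set.mem_add.mp (h ▸ Set.mem_univ x)
  rw [map_add]
  refine add_mem ?_ ?_
  · rw [← mul_one (ι R a)]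
    exact Submodule.mul_mem_mul (Algebra.subset_adjoin ⟨a, ha, rfl⟩)
      (Submodule.subset_span (Set.mem_insert _ _))
  · rw [← one_mul (ι R b)]
    exact Submodule.mul_mem_mul (one_mem (Algebra.adjoin R _))
      (Submodule.subset_span (Set.mem_insert_of_mem _ ⟨b, hb, rfl⟩))

theorem ι_mul_mem_adjoin_mul_span (h : T₁ + T₂ = Set.univ) {a : UniversalEnvelopingAlgebra R L}
    (ha : a ∈ Algebra.adjoin R (ι R '' T₁)) (x : L) :
    ι R x * a ∈ Subalgebra.toSubmodule (Algebra.adjoin R (ι R '' T₁)) *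
      Submodule.span R (insert 1 (ι R '' T₂)) := by
  set A := Subalgebra.toSubmodule (Algebra.adjoin R (ι R '' T₁))
  set Q := A * Submodule.span R (insert 1 (ι R '' T₂))
  have hAQ : A * Q ≤ Q := by
    rw [← mul_assoc, (Algebra.adjoin R _).isIdempotentElem_toSubmodule.eq]
  induction ha using Algebra.adjoin_induction generalizing x with
  | mem _ hy =>
    obtain ⟨y, hy, rfl⟩ := hy
    rw [ι_mul_ι]
    exact add_mem (hAQ (Submodule.mul_mem_mul (Algebra.subset_adjoin ⟨y, hy, rfl⟩)
      (ι_mem_adjoin_mul_span h x))) (ι_mem_adjoin_mul_span h _)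
  | algebraMap r =>
    rw [← Algebra.commutes, ← Algebra.smul_def]
    exact Q.smul_mem r (ι_mem_adjoin_mul_span h x)
  | add _ _ _ _ hy hz => rw [mul_add]; exact add_mem (hy x) (hz x)
  | mul y z hy hz ihy ihz =>
    have hQz : Q * Submodule.span R {z} ≤ Q := by
      rw [mul_assoc, Submodule.span_mul_span, Set.mul_singleton]
      refine le_trans (mul_le_mul_right (Submodule.span_le.mpr ?_) A) hAQ
      rw [Set.image_subset_iff, Set.insert_subset_iff]
      refine ⟨?_, fun _ ⟨t, _, ht⟩ ↦ ht ▸ ihz t⟩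
      change 1 * z ∈ Q
      rw [one_mul, ← mul_one z]
      exact Submodule.mul_mem_mul hz (Submodule.subset_span (Set.mem_insert _ _))
    rw [← mul_assoc]
    exact hQz (Submodule.mul_mem_mul (ihy x) (Submodule.mem_span_singleton_self z))

theorem toSubmodule_adjoin_mul_toSubmodule_adjoin_eq_top (h : T₁ + T₂ = Set.univ) :
    Subalgebra.toSubmodule (Algebra.adjoin R (ι R '' T₁)) *
      Subalgebra.toSubmodule (Algebra.adjoin R (ι R '' T₂)) = ⊤ := by
  set A := Subalgebra.toSubmodule (Algebra.adjoin R (ι R '' T₁))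
  set B := Subalgebra.toSubmodule (Algebra.adjoin R (ι R '' T₂))
  have hPB : Submodule.span R (insert 1 (ι R '' T₂)) * B ≤ B := by
    refine le_trans (mul_le_mul_left ?_ B) (Algebra.adjoin R _).isIdempotentElem_toSubmodule.le
    exact Submodule.span_le.mpr
      (Set.insert_subset (one_mem (Algebra.adjoin R _)) Algebra.subset_adjoin)
  have hone : (1 : UniversalEnvelopingAlgebra R L) ∈ A * B :=
    mul_one (1 : UniversalEnvelopingAlgebra R L) ▸
      Submodule.mul_mem_mul (one_mem (Algebra.adjoin R _)) (one_mem (Algebra.adjoin R _))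
  refine eq_top_iff.mpr fun u _ ↦ mul_one u ▸ mul_mem_of_forall_ι_mul_mem (fun x v hv ↦ ?_) u hone
  refine Submodule.mul_induction_on hv (fun a ha b hb ↦ ?_)
    (fun _ _ ↦ by rw [mul_add]; exact add_mem)
  rw [← mul_assoc]
  refine mul_le_mul_right hPB A ?_
  rw [← mul_assoc]
  exact Submodule.mul_mem_mul (ι_mul_mem_adjoin_mul_span h ha x) hb

end

end UniversalEnvelopingAlgebra

section BlockMatrices

variable {n : ℕ} {R : Type*} [CommRing R]

theorem wMat_apply (i j : Fin n) : wMat n R i j = if j = i.rev then 1 else 0 := by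
  have : (i : ℕ) + j + 1 = n ↔ j = i.rev := by
    rw [Fin.ext_iff, Fin.val_rev]
    omega
  simp only [wMat, this]

theorem wMat_mul_apply (X : Matrix (Fin n) (Fin n) R) (i j : Fin n) :
    (wMat n R * X) i j = X i.rev j := by
  simp [Matrix.mul_apply, wMat_apply]

theorem mul_wMat_apply (X : Matrix (Fin n) (Fin n) R) (i j : Fin n) :
    (X * wMat n R) i j = X i j.rev := by
  simp [Matrix.mul_apply, wMat_apply, ← Fin.rev_eq_iff]

theorem wMat_mul_wMat : wMat n R * wMat n R = 1 := by
  ext i j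
  simp [wMat_mul_apply, wMat_apply, Matrix.one_apply, eq_comm]

theorem xiMat_mul_fromBlocks_mul_xiInvMat (P Q S : Matrix (Fin n) (Fin n) R) :
    xiMat n R * fromBlocks P 0 Q S * xiInvMat n R =
      fromBlocks (P + wMat n R * Q) (wMat n R * S * wMat n R - P - wMat n R * Q)
        (wMat n R * Q) (wMat n R * S * wMat n R - wMat n R * Q) := by
  simp only [xiMat, xiInvMat, fromBlocks_multiply, fromBlocks_inj]
  refine ⟨?_, ?_, ?_, ?_⟩ <;> noncomm_ring

theorem fromBlocks_apply_eq_zero_of_lt {P Q S : Matrix (Fin n) (Fin n) R}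
    (hP : ∀ i j, i < j → P i j = 0) (hS : ∀ i j, i < j → S i j = 0) (i j : Fin n ⊕ Fin n)
    (hij : (finSumFinEquiv i : ℕ) < finSumFinEquiv j) : fromBlocks P 0 Q S i j = 0 := by
  rcases i with i | i <;> rcases j with j | j <;>
    simp only [finSumFinEquiv_apply_left, finSumFinEquiv_apply_right, Fin.val_castAdd,
      Fin.val_natAdd] at hij
  · exact hP i j hij
  · rfl
  · omega
  · exact hS i j (by simpa using hij)

variable (n R) in
theorem blockDiag_add_xiConj_lowerTriangular_eq_univ :
    {m | ∃ h₁ h₂ : Matrix (Fin n) (Fin n) R, m = iotaBlk h₁ h₂} +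
      {m | ∃ L : Matrix (Fin n ⊕ Fin n) (Fin n ⊕ Fin n) R,
        (∀ i j : Fin n ⊕ Fin n, (finSumFinEquiv i : ℕ) < (finSumFinEquiv j : ℕ) → L i j = 0) ∧
          m = xiMat n R * L * xiInvMat n R} = Set.univ := by
  refine Set.eq_univ_of_forall fun M ↦ ?_
  obtain ⟨A, B, C, D, rfl⟩ : ∃ A B C D, M = fromBlocks A B C D :=
    ⟨_, _, _, _, (fromBlocks_toBlocks M).symm⟩
  let D₁ : Matrix (Fin n) (Fin n) R := of fun i j ↦ if i < j then (A - C) i j else (A + B) i j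
  refine Set.mem_add.mpr ⟨iotaBlk D₁ (D₁ + C + D - A - B), ⟨_, _, rfl⟩, _,
    ⟨fromBlocks (A - C - D₁) 0 (wMat n R * C) (wMat n R * (A + B - D₁) * wMat n R),
      fromBlocks_apply_eq_zero_of_lt (fun i j hij ↦ ?_) (fun i j hij ↦ ?_), rfl⟩, ?_⟩
  · simp [D₁, hij]
  · have : ¬ i.rev < j.rev := by simpa using hij.le
    simp [mul_wMat_apply, wMat_mul_apply, D₁, this]
  · rw [xiMat_mul_fromBlocks_mul_xiInvMat, iotaBlk, fromBlocks_add]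
    simp only [← mul_assoc, wMat_mul_wMat, one_mul]
    simp only [mul_assoc, wMat_mul_wMat, mul_one]
    congr 1 <;> abel

end BlockMatrices

theorem statement2_general (n : ℕ) (R : Type*) [CommRing R]
    (u : UniversalEnvelopingAlgebra R (Matrix (Fin n ⊕ Fin n) (Fin n ⊕ Fin n) R)) :
    u ∈ Submodule.span R
      {x : UniversalEnvelopingAlgebra R (Matrix (Fin n ⊕ Fin n) (Fin n ⊕ Fin n) R) |
        ∃ a ∈ Algebra.adjoin R
            {y : UniversalEnvelopingAlgebra R (Matrix (Fin n ⊕ Fin n) (Fin n ⊕ Fin n) R) |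
              ∃ h₁ h₂ : Matrix (Fin n) (Fin n) R,
                y = UniversalEnvelopingAlgebra.ι R (iotaBlk h₁ h₂)},
        ∃ b ∈ Algebra.adjoin R
            {y : UniversalEnvelopingAlgebra R (Matrix (Fin n ⊕ Fin n) (Fin n ⊕ Fin n) R) |
              ∃ L : Matrix (Fin n ⊕ Fin n) (Fin n ⊕ Fin n) R,
                (∀ i j : Fin n ⊕ Fin n,
                    (finSumFinEquiv i : ℕ) < (finSumFinEquiv j : ℕ) → L i j = 0) ∧
                y = UniversalEnvelopingAlgebra.ι R (xiMat n R * L * xiInvMat n R)},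
        x = a * b} := by
  have h := UniversalEnvelopingAlgebra.toSubmodule_adjoin_mul_toSubmodule_adjoin_eq_top (R := R)
    (blockDiag_add_xiConj_lowerTriangular_eq_univ n R)
  rw [Submodule.mul_eq_span_mul_set, Submodule.eq_top_iff'] at h
  convert h u using 2
  · -- the span in the statement uses the module structure coming from the Lie algebra instance
    rfl
  · ext x
    simp only [Set.mem_mul, SetLike.mem_coe, Subalgebra.mem_toSubmodule, Set.mem_ofPred_eq,
      eq_comm (a := x)]
    congr! with y <;> ext y <;> simp [eq_comm, -UniversalEnvelopingAlgebra.ι_apply]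

/-- `U(gl_{2n}) = U(h) · U(ξ b⁻ ξ⁻¹)`: every element of the universal enveloping algebra of
`M_{2n}(R)` is an `R`-linear combination of products `a · b`, with `a` in the subalgebra
generated by the block diagonal matrices `ι(h₁,h₂)` and `b` in the subalgebra generated by the
matrices `ξ · L · ξ⁻¹` with `L` lower triangular. -/
theorem statement2 (n : ℕ) (hn : 1 ≤ n) (R : Type*) [CommRing R]
    (u : UniversalEnvelopingAlgebra R (Matrix (Fin n ⊕ Fin n) (Fin n ⊕ Fin n) R)) :
    u ∈ Submodule.span R
      {x : UniversalEnvelopingAlgebra R (Matrix (Fin n ⊕ Fin n) (Fin n ⊕ Fin n) R) |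
        ∃ a ∈ Algebra.adjoin R
            {y : UniversalEnvelopingAlgebra R (Matrix (Fin n ⊕ Fin n) (Fin n ⊕ Fin n) R) |
              ∃ h₁ h₂ : Matrix (Fin n) (Fin n) R,
                y = UniversalEnvelopingAlgebra.ι R (iotaBlk h₁ h₂)},
        ∃ b ∈ Algebra.adjoin R
            {y : UniversalEnvelopingAlgebra R (Matrix (Fin n ⊕ Fin n) (Fin n ⊕ Fin n) R) |
              ∃ L : Matrix (Fin n ⊕ Fin n) (Fin n ⊕ Fin n) R,
                (∀ i j : Fin n ⊕ Fin n,
                    (finSumFinEquiv i : ℕ) < (finSumFinEquiv j : ℕ) → L i j = 0) ∧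
                y = UniversalEnvelopingAlgebra.ι R (xiMat n R * L * xiInvMat n R)},
        x = a * b} :=
  statement2_general n R u
end

section
/- Let n ≥ 1 and β ≥ 0 be integers, and let W : GL_{2n}(F) → ℂ satisfy: W(g·[[1_n,X],[0,1_n]]) = W(g) for all X ∈ M_n(O) and g ∈ GL_{2n}(F), and W([[1_n,Y],[0,1_n]]·g) = ψ(tr Y)·W(g) for all Y ∈ M_n(F) and g ∈ GL_{2n}(F). Then for every h ∈ GL_n(F) with h ∉ ϖ^{−β−δ}M_n(O), one has W(ι(h,1_n)·ξ·t^β) = 0. (The zeta integrand is supported on GL_n(F) ∩ ϖ^{−β−δ}M_n(O).) -/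
open Matrix

/-- The matrix `t(a) = ι(a·1_n, 1_n)`. -/
def tMat (n : ℕ) (R : Type*) [CommRing R] (a : R) :
    Matrix (Fin n ⊕ Fin n) (Fin n ⊕ Fin n) R :=
  iotaBlk (a • (1 : Matrix (Fin n) (Fin n) R)) 1

/-! Write `g = ι(h, 1) ξ t^β = [[ϖ^β h, h w], [0, w]]`. For `X ∈ M_n(O)` one has
`g [[1, X], [0, 1]] = [[1, Y], [0, 1]] g` with `Y = ϖ^β h X w`, so `W g = ψ(tr Y) W g`.
If `v(h i j) < -β - δ`, then `X = c E_{j, rev i}` has `tr Y = c ϖ^β h i j`, and `c ∈ O` can be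
chosen so that this is any given point of `ϖ^{-δ-1} O`, in particular one where `ψ ≠ 1`. -/

section Valuation

variable {F : Type*} [Field F] {v : F → ℤ}
  (hv_mul : ∀ x y : F, x ≠ 0 → y ≠ 0 → v (x * y) = v x + v y)
include hv_mul

lemma val_one : v 1 = 0 := by
  have := hv_mul 1 1 one_ne_zero one_ne_zero
  rw [one_mul] at this
  omega

lemma val_inv {x : F} (hx : x ≠ 0) : v x⁻¹ = -v x := by
  have := hv_mul x x⁻¹ hx (inv_ne_zero hx)
  rw [mul_inv_cancel₀ hx, val_one hv_mul] at this
  omega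

lemma val_div {x y : F} (hx : x ≠ 0) (hy : y ≠ 0) : v (x / y) = v x - v y := by
  rw [div_eq_mul_inv, hv_mul _ _ hx (inv_ne_zero hy), val_inv hv_mul hy, sub_eq_add_neg]

lemma val_zpow {ϖ : F} (hϖ0 : ϖ ≠ 0) (hv_ϖ : v ϖ = 1) (m : ℤ) : v (ϖ ^ m) = m := by
  induction m using Int.induction_on with
  | zero => simpa using val_one hv_mul
  | succ k ih => rw [zpow_add_one₀ hϖ0, hv_mul _ _ (zpow_ne_zero _ hϖ0) hϖ0, ih, hv_ϖ]
  | pred k ih =>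
    rw [zpow_sub_one₀ hϖ0, hv_mul _ _ (zpow_ne_zero _ hϖ0) (inv_ne_zero hϖ0), ih,
      val_inv hv_mul hϖ0, hv_ϖ, sub_eq_add_neg]

lemma zpow_mul_mem_iff {O : Subring F} (hv_O : ∀ x : F, x ≠ 0 → (x ∈ O ↔ 0 ≤ v x))
    {ϖ : F} (hϖ0 : ϖ ≠ 0) (hv_ϖ : v ϖ = 1) (m : ℤ) {x : F} (hx : x ≠ 0) :
    ϖ ^ m * x ∈ O ↔ -m ≤ v x := by
  rw [hv_O _ (mul_ne_zero (zpow_ne_zero _ hϖ0) hx), hv_mul _ _ (zpow_ne_zero _ hϖ0) hx,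
    val_zpow hv_mul hϖ0 hv_ϖ]
  omega

lemma div_zpow_mul_mem {O : Subring F} (hv_O : ∀ x : F, x ≠ 0 → (x ∈ O ↔ 0 ≤ v x))
    {ϖ : F} (hϖ0 : ϖ ≠ 0) (hv_ϖ : v ϖ = 1) {k l : ℤ} {x b : F} (hx : ϖ ^ (k + 1) * x ∈ O)
    (hb : ϖ ^ (l + k) * b ∉ O) : x / (ϖ ^ l * b) ∈ O := by
  rcases eq_or_ne x 0 with rfl | hx0
  · simp
  have hb0 : b ≠ 0 := by
    rintro rfl
    exact hb (by simp)
  have hϖl : ϖ ^ l * b ≠ 0 := mul_ne_zero (zpow_ne_zero _ hϖ0) hb0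
  rw [zpow_mul_mem_iff hv_mul hv_O hϖ0 hv_ϖ _ hx0] at hx
  rw [zpow_mul_mem_iff hv_mul hv_O hϖ0 hv_ϖ _ hb0] at hb
  rw [hv_O _ (div_ne_zero hx0 hϖl), val_div hv_mul hx0 hϖl,
    hv_mul _ _ (zpow_ne_zero _ hϖ0) hb0, val_zpow hv_mul hϖ0 hv_ϖ]
  omega

end Valuation

section Blocks

variable {m o R : Type*} [CommRing R] [Fintype m] [Fintype o] [DecidableEq m] [DecidableEq o]

lemma fromBlocks_mul_unipotent (A : Matrix m m R) (B : Matrix m o R) {D D' : Matrix o o R}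
    (hD : D' * D = 1) (X : Matrix m o R) :
    fromBlocks A B 0 D * fromBlocks 1 X 0 1 =
      fromBlocks 1 (A * X * D') 0 1 * fromBlocks A B 0 D := by
  rw [fromBlocks_multiply, fromBlocks_multiply]
  simp [Matrix.mul_assoc, hD, add_comm]

end Blocks

lemma wMat_eq_toMatrix_revPerm (n : ℕ) (R : Type*) [CommRing R] :
    wMat n R = (Fin.revPerm.toPEquiv.toMatrix : Matrix (Fin n) (Fin n) R) := by
  ext i j
  simp only [wMat, PEquiv.toMatrix_apply, Equiv.toPEquiv_apply, Option.mem_def,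
    Option.some_inj, Fin.revPerm_apply, Fin.ext_iff, Fin.val_rev]
  have := i.isLt
  congr 1
  exact propext (by omega)

lemma wMat_mul (n : ℕ) {R : Type*} [CommRing R] (A : Matrix (Fin n) (Fin n) R) :
    wMat n R * A = A.submatrix Fin.rev id := by
  rw [wMat_eq_toMatrix_revPerm, PEquiv.toMatrix_toPEquiv_mul]
  rfl

lemma wMat_mul_self (n : ℕ) (R : Type*) [CommRing R] : wMat n R * wMat n R = 1 := by
  rw [wMat_mul, wMat_eq_toMatrix_revPerm]
  ext i j
  simp [PEquiv.toMatrix_apply, one_apply]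

lemma tMat_pow (n : ℕ) {R : Type*} [CommRing R] (a : R) (k : ℕ) :
    tMat n R a ^ k = tMat n R (a ^ k) := by
  simp [tMat, iotaBlk, fromBlocks_diagonal_pow, smul_pow]

lemma iotaBlk_mul_xiMat_mul_tMat {n : ℕ} {R : Type*} [CommRing R] (h : Matrix (Fin n) (Fin n) R)
    (a : R) :
    iotaBlk h 1 * xiMat n R * tMat n R a = fromBlocks (a • h) (h * wMat n R) 0 (wMat n R) := by
  simp [iotaBlk, xiMat, tMat, fromBlocks_multiply]

lemma trace_mul_single_mul_wMat {n : ℕ} {R : Type*} [CommRing R] (A : Matrix (Fin n) (Fin n) R)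
    (i j : Fin n) (c : R) : (A * single j i.rev c * wMat n R).trace = c * A i j := by
  rw [trace_mul_cycle, trace_mul_single, wMat_mul]
  simp [mul_comm]

theorem statement9_general
    (F : Type*) [Field F] (O : Subring F) (ϖ : F) (hϖ0 : ϖ ≠ 0)
    (v : F → ℤ)
    (hv_mul : ∀ x y : F, x ≠ 0 → y ≠ 0 → v (x * y) = v x + v y)
    (hv_ϖ : v ϖ = 1)
    (hv_O : ∀ x : F, x ≠ 0 → (x ∈ O ↔ 0 ≤ v x))
    (δ : ℤ) (ψ : F → ℂ)
    (hψ_nontriv : ∃ x : F, ϖ ^ (δ + 1) * x ∈ O ∧ ψ x ≠ 1)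
    (n : ℕ) (β : ℕ)
    (W : Matrix (Fin n ⊕ Fin n) (Fin n ⊕ Fin n) F → ℂ)
    (hWright : ∀ X : Matrix (Fin n) (Fin n) F, (∀ i j, X i j ∈ O) →
      ∀ g, W (g * Matrix.fromBlocks 1 X 0 1) = W g)
    (hWleft : ∀ (Y : Matrix (Fin n) (Fin n) F) (g),
      W (Matrix.fromBlocks 1 Y 0 1 * g) = ψ Y.trace * W g)
    (h : Matrix (Fin n) (Fin n) F)
    (hsupp : ¬ ∀ i j : Fin n, ϖ ^ ((β : ℤ) + δ) * h i j ∈ O) :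
    W (iotaBlk h 1 * xiMat n F * tMat n F ϖ ^ β) = 0 := by
  simp only [not_forall] at hsupp
  obtain ⟨i, j, hij⟩ := hsupp
  obtain ⟨x, hxO, hψx⟩ := hψ_nontriv
  set c := x / (ϖ ^ (β : ℤ) * h i j)
  have hcO : c ∈ O := div_zpow_mul_mem hv_mul hv_O hϖ0 hv_ϖ hxO hij
  have hcx : c * (ϖ ^ β * h i j) = x := by
    rw [← zpow_natCast]
    exact div_mul_cancel₀ x (mul_ne_zero (zpow_ne_zero _ hϖ0) (fun h0 ↦ hij (by simp [h0])))
  set X := single j i.rev c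
  have hXO : ∀ p q, X p q ∈ O := fun p q ↦ by
    simp only [X, single_apply]
    split_ifs
    exacts [hcO, O.zero_mem]
  rw [tMat_pow, iotaBlk_mul_xiMat_mul_tMat]
  set g := fromBlocks (ϖ ^ β • h) (h * wMat n F) 0 (wMat n F)
  have htr : (ϖ ^ β • h * X * wMat n F).trace = x := by
    rw [trace_mul_single_mul_wMat, Matrix.smul_apply, smul_eq_mul, hcx]
  have hfix : W g = ψ x * W g := calc
    W g = W (g * fromBlocks 1 X 0 1) := (hWright X hXO g).symm
    _ = W (fromBlocks 1 (ϖ ^ β • h * X * wMat n F) 0 1 * g) := by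
      rw [fromBlocks_mul_unipotent _ _ (wMat_mul_self n F)]
    _ = ψ x * W g := by rw [hWleft, htr]
  by_contra hW
  exact hψx ((mul_eq_right₀ hW).mp hfix.symm)

/-- Support of the zeta integrand: if `W` is right-invariant under `[[1,X],[0,1]]`,
`X ∈ M_n(O)`, and transforms by `ψ(tr Y)` under left translation by `[[1,Y],[0,1]]`,
`Y ∈ M_n(F)`, then `W(ι(h,1)·ξ·t^β)` vanishes for `h ∈ GL_n(F)` with
`h ∉ ϖ^{-β-δ} M_n(O)`. Here `F` is a p-adic-like field: a field with normalized valuation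
`v`, valuation ring `O` and uniformizer `ϖ`; `ψ` is an additive character trivial on
`ϖ^{-δ}O` but not on `ϖ^{-δ-1}O`. -/
theorem statement9
    (F : Type*) [Field F] (O : Subring F) (ϖ : F) (hϖO : ϖ ∈ O) (hϖ0 : ϖ ≠ 0)
    (v : F → ℤ)
    (hv_mul : ∀ x y : F, x ≠ 0 → y ≠ 0 → v (x * y) = v x + v y)
    (hv_ϖ : v ϖ = 1)
    (hv_O : ∀ x : F, x ≠ 0 → (x ∈ O ↔ 0 ≤ v x))
    (δ : ℤ) (ψ : F → ℂ)
    (hψ_add : ∀ x y : F, ψ (x + y) = ψ x * ψ y)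
    (hψ_triv : ∀ x : F, ϖ ^ δ * x ∈ O → ψ x = 1)
    (hψ_nontriv : ∃ x : F, ϖ ^ (δ + 1) * x ∈ O ∧ ψ x ≠ 1)
    (n : ℕ) (hn : 1 ≤ n) (β : ℕ)
    (W : Matrix (Fin n ⊕ Fin n) (Fin n ⊕ Fin n) F → ℂ)
    (hWright : ∀ X : Matrix (Fin n) (Fin n) F, (∀ i j, X i j ∈ O) →
      ∀ g, W (g * Matrix.fromBlocks 1 X 0 1) = W g)
    (hWleft : ∀ (Y : Matrix (Fin n) (Fin n) F) (g),
      W (Matrix.fromBlocks 1 Y 0 1 * g) = ψ Y.trace * W g)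
    (h : Matrix (Fin n) (Fin n) F) (hh : IsUnit h)
    (hsupp : ¬ ∀ i j : Fin n, ϖ ^ ((β : ℤ) + δ) * h i j ∈ O) :
    W (iotaBlk h 1 * xiMat n F * tMat n F ϖ ^ β) = 0 :=
  statement9_general F O ϖ hϖ0 v hv_mul hv_ϖ hv_O δ ψ hψ_nontriv n β W hWright hWleft h hsupp
end

section
/- Let n ≥ 1, let B(F) ⊆ GL_{2n}(F) be the subgroup of invertible upper triangular matrices, let w ∈ GL_{2n}(O) be the 2n×2n antidiagonal permutation matrix, let J be the parahoric subgroup and t := ι(ϖ·1_n, 1_n). Let χ : B(F) → ℂ^× be a homomorphism trivial on B(F) ∩ GL_{2n}(O), and let f : GL_{2n}(F) → ℂ satisfy f(b·g·k) = χ(b)·f(g) for all b ∈ B(F), g ∈ GL_{2n}(F), k ∈ J, and f(g) = 0 whenever g ∉ B(F)·w·J. Let Rep ⊆ M_n(O) be any set of representatives of M_n(O)/ϖM_n(O). Then for every g ∈ GL_{2n}(F): Σ_{m ∈ Rep} f(g·[[1_n, m],[0, 1_n]]·t) = χ(ι(1_n, ϖ·1_n))·f(g). (That is, f is an eigenvector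 of the Hecke operator U = [J t J] with the indicated eigenvalue.) -/
/-!
Write `u(m) = [[1, m], [0, 1]]` and `g = b w k` with `b ∈ B(F)` and `k = [[A, B], [C, D]] ∈ J`.
Since `ϖ` lies in the Jacobson radical of `O`, the block `A` is invertible over `O`. The translate
`k u(m) t` lies in `t J` when `A m + B ≡ 0 (mod ϖ)`, which holds for exactly one representative,
`m ≡ -A⁻¹ B`; for it, `w t = ι(1, ϖ) w` puts `g u(m) t` in `b ι(1, ϖ) w J`. For every other `m`,
comparing the upper blocks of `k u(m) t = (w b' w) k'`, where `w b' w` is block lower triangular,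
shows that `g u(m) t ∉ B w J`. Finally, if `g ∉ B w J` then no `g u(m) t` lies in `B w J`,
because `B w J t⁻¹ ⊆ B w J`.
-/

open Matrix

/-- The `2n × 2n` antidiagonal permutation matrix (indices via `finSumFinEquiv`). -/
def wFull (n : ℕ) (R : Type*) [CommRing R] :
    Matrix (Fin n ⊕ Fin n) (Fin n ⊕ Fin n) R :=
  fun i j => if (finSumFinEquiv i : ℕ) + (finSumFinEquiv j : ℕ) + 1 = n + n then 1 else 0

/-- Membership in `B(F)`: invertible upper triangular `2n × 2n` matrix. -/
def UpperTriInv {n : ℕ} {F : Type*} [Field F]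
    (b : Matrix (Fin n ⊕ Fin n) (Fin n ⊕ Fin n) F) : Prop :=
  IsUnit b ∧ ∀ i j : Fin n ⊕ Fin n,
    (finSumFinEquiv j : ℕ) < (finSumFinEquiv i : ℕ) → b i j = 0

/-- Membership in `GL_{2n}(O)` for a subring `O ⊆ F`. -/
def inGLOS {n : ℕ} {F : Type*} [Field F] (O : Subring F)
    (g : Matrix (Fin n ⊕ Fin n) (Fin n ⊕ Fin n) F) : Prop :=
  ∃ g', g * g' = 1 ∧ g' * g = 1 ∧ (∀ i j, g i j ∈ O) ∧ (∀ i j, g' i j ∈ O)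

/-- Membership in the parahoric subgroup `J` of type `(n,n)`. -/
def inParahoricS {n : ℕ} {F : Type*} [Field F] (O : Subring F) (ϖ : F)
    (g : Matrix (Fin n ⊕ Fin n) (Fin n ⊕ Fin n) F) : Prop :=
  inGLOS O g ∧ ∀ i j : Fin n, ∃ c ∈ O, g (Sum.inr i) (Sum.inl j) = ϖ * c


open Pointwise

section Valuation

variable {F : Type*} [Field F] {O : Subring F} {ϖ : F} {v : F → ℤ}

lemma valuation_inv (hv_mul : ∀ x y : F, x ≠ 0 → y ≠ 0 → v (x * y) = v x + v y)
    {x : F} (hx : x ≠ 0) : v x⁻¹ = -v x := by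
  have h1 := hv_mul 1 1 one_ne_zero one_ne_zero
  have h2 := hv_mul x x⁻¹ hx (inv_ne_zero hx)
  rw [one_mul] at h1
  rw [mul_inv_cancel₀ hx] at h2
  omega

lemma inv_mem_or_mul_inv_mem (hϖ0 : ϖ ≠ 0)
    (hv_mul : ∀ x y : F, x ≠ 0 → y ≠ 0 → v (x * y) = v x + v y)
    (hv_ϖ : v ϖ = 1) (hv_O : ∀ x : F, x ≠ 0 → (x ∈ O ↔ 0 ≤ v x)) {s : F} (hs : s ∈ O) :
    (s ≠ 0 ∧ s⁻¹ ∈ O) ∨ s * ϖ⁻¹ ∈ O := by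
  by_cases hs0 : s = 0
  · exact .inr (by rw [hs0, zero_mul]; exact zero_mem O)
  rcases ((hv_O s hs0).1 hs).eq_or_lt with hv | hv
  · refine .inl ⟨hs0, (hv_O _ (inv_ne_zero hs0)).2 ?_⟩
    rw [valuation_inv hv_mul hs0]
    omega
  · refine .inr ((hv_O _ (mul_ne_zero hs0 (inv_ne_zero hϖ0))).2 ?_)
    rw [hv_mul _ _ hs0 (inv_ne_zero hϖ0), valuation_inv hv_mul hϖ0, hv_ϖ]
    omega

lemma mem_jacobson_bot_of_valuation (hϖO : ϖ ∈ O) (hϖ0 : ϖ ≠ 0)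
    (hv_mul : ∀ x y : F, x ≠ 0 → y ≠ 0 → v (x * y) = v x + v y)
    (hv_ϖ : v ϖ = 1) (hv_O : ∀ x : F, x ≠ 0 → (x ∈ O ↔ 0 ≤ v x)) :
    (⟨ϖ, hϖO⟩ : O) ∈ (⊥ : Ideal O).jacobson := by
  have hϖinv : ϖ⁻¹ ∉ O := fun h => by
    have := (hv_O _ (inv_ne_zero hϖ0)).1 h
    rw [valuation_inv hv_mul hϖ0, hv_ϖ] at this
    omega
  refine Ideal.mem_jacobson_bot.2 fun y => ?_
  rcases inv_mem_or_mul_inv_mem hϖ0 hv_mul hv_ϖ hv_O (s := ϖ * y + 1)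
    (add_mem (mul_mem hϖO y.2) (one_mem O)) with ⟨hs0, hsinv⟩ | hs
  · exact IsUnit.of_mul_eq_one ⟨_, hsinv⟩ (Subtype.ext (mul_inv_cancel₀ hs0))
  · -- `ϖ y + 1 ∈ ϖ O` would make `ϖ` a unit of `O`
    refine absurd ?_ hϖinv
    have : ϖ⁻¹ = (ϖ * y + 1) * ϖ⁻¹ - y := by field_simp; ring
    rw [this]
    exact sub_mem hs y.2

end Valuation

section IntegralMatrix

variable {F : Type*} [Field F] {O : Subring F} {ι : Type*}

lemma isUnit_iff_inv_mem {x : O} : IsUnit x ↔ (x : F) ≠ 0 ∧ (x : F)⁻¹ ∈ O := by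
  refine ⟨fun ⟨u, hu⟩ => ?_, fun ⟨hx, hxinv⟩ => ?_⟩
  · have h : (x : F) * (u⁻¹ : Oˣ) = 1 := by rw [← hu]; exact congrArg Subtype.val u.mul_inv
    exact ⟨left_ne_zero_of_mul_eq_one h, inv_eq_of_mul_eq_one_right h ▸ (u⁻¹ : Oˣ).1.2⟩
  · exact IsUnit.of_mul_eq_one ⟨_, hxinv⟩ (Subtype.ext (mul_inv_cancel₀ hx))

lemma mem_smul_matrix_iff {ϖ : F} {X : Matrix ι ι F} :
    X ∈ ϖ • (O : Set F).matrix ↔ ∀ i j, ∃ c ∈ O, X i j = ϖ * c := by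
  rw [Set.mem_smul_set]
  constructor
  · rintro ⟨Y, hY, rfl⟩ i j
    exact ⟨Y i j, hY i j, rfl⟩
  · intro h
    choose c hc hX using h
    exact ⟨Matrix.of c, hc, by ext i j; exact (hX i j).symm⟩

variable [Fintype ι] [DecidableEq ι]

lemma mem_smul_matrix {ϖ : F} {X : Matrix ι ι F} :
    X ∈ ϖ • (O : Set F).matrix ↔ ∃ Y ∈ O.matrix, ϖ • Y = X :=
  Set.mem_smul_set

lemma mul_mem_smul_matrix {ϖ : F} {A X : Matrix ι ι F} (hA : A ∈ O.matrix)
    (hX : X ∈ ϖ • (O : Set F).matrix) : A * X ∈ ϖ • (O : Set F).matrix := by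
  obtain ⟨Y, hY, rfl⟩ := mem_smul_matrix.1 hX
  exact mem_smul_matrix.2 ⟨A * Y, mul_mem hA hY, (Matrix.mul_smul A ϖ Y).symm⟩

lemma mul_add_mem_smul_matrix_iff {ϖ : F} {A B X : Matrix ι ι F} (hAu : IsUnit A.det)
    (hA : A ∈ O.matrix) (hAinv : A⁻¹ ∈ O.matrix) :
    A * X + B ∈ ϖ • (O : Set F).matrix ↔ -(A⁻¹ * B) - X ∈ ϖ • (O : Set F).matrix := by
  constructor
  · intro h
    convert mul_mem_smul_matrix (neg_mem hAinv) h using 1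
    rw [Matrix.neg_mul, Matrix.mul_add, ← Matrix.mul_assoc, nonsing_inv_mul _ hAu, Matrix.one_mul]
    abel
  · intro h
    convert mul_mem_smul_matrix (neg_mem hA) h using 1
    rw [Matrix.neg_mul, Matrix.mul_sub, Matrix.mul_neg, ← Matrix.mul_assoc, mul_nonsing_inv _ hAu,
      Matrix.one_mul]
    abel

lemma exists_map_subtype_eq {M : Matrix ι ι F} (hM : M ∈ O.matrix) :
    ∃ N : Matrix ι ι O, N.map O.subtype = M :=
  ⟨Matrix.of fun i j => ⟨M i j, hM i j⟩, rfl⟩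

lemma det_map_subtype (N : Matrix ι ι O) : (N.map O.subtype).det = N.det :=
  (O.subtype.map_det N).symm

lemma det_mem_of_mem_matrix {M : Matrix ι ι F} (hM : M ∈ O.matrix) : M.det ∈ O := by
  obtain ⟨N, rfl⟩ := exists_map_subtype_eq hM
  rw [det_map_subtype]
  exact N.det.2

lemma adjugate_mem_matrix {M : Matrix ι ι F} (hM : M ∈ O.matrix) : M.adjugate ∈ O.matrix := by
  obtain ⟨N, rfl⟩ := exists_map_subtype_eq hM
  rw [← RingHom.mapMatrix_apply, ← RingHom.map_adjugate]
  exact fun i j => (N.adjugate i j).2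

lemma smul_mem_matrix {c : F} (hc : c ∈ O) {M : Matrix ι ι F} (hM : M ∈ O.matrix) :
    c • M ∈ O.matrix :=
  fun i j => O.mul_mem hc (hM i j)

lemma nonsing_inv_mem_matrix {M : Matrix ι ι F} (hM : M ∈ O.matrix) (hdet : M.det⁻¹ ∈ O) :
    M⁻¹ ∈ O.matrix := by
  rw [Matrix.inv_def, Ring.inverse_eq_inv']
  exact smul_mem_matrix hdet (adjugate_mem_matrix hM)

lemma fromBlocks_mem_matrix {A B C D : Matrix ι ι F} (hA : A ∈ O.matrix)
    (hB : B ∈ O.matrix) (hC : C ∈ O.matrix) (hD : D ∈ O.matrix) :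
    fromBlocks A B C D ∈ O.matrix := by
  rintro (i | i) (j | j)
  exacts [hA i j, hB i j, hC i j, hD i j]

lemma toBlocks_mem_matrix {M : Matrix (ι ⊕ ι) (ι ⊕ ι) F} (hM : M ∈ O.matrix) :
    M.toBlocks₁₁ ∈ O.matrix ∧ M.toBlocks₁₂ ∈ O.matrix ∧ M.toBlocks₂₁ ∈ O.matrix ∧
      M.toBlocks₂₂ ∈ O.matrix :=
  ⟨fun _ _ => hM _ _, fun _ _ => hM _ _, fun _ _ => hM _ _, fun _ _ => hM _ _⟩

end IntegralMatrix

section Triangular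

variable {F : Type*} [Field F] {n : ℕ}

lemma upperTriInv_iff {b : Matrix (Fin n ⊕ Fin n) (Fin n ⊕ Fin n) F} :
    UpperTriInv b ↔ IsUnit b ∧ b.BlockTriangular finSumFinEquiv :=
  Iff.rfl

lemma UpperTriInv.mul {b b' : Matrix (Fin n ⊕ Fin n) (Fin n ⊕ Fin n) F}
    (hb : UpperTriInv b) (hb' : UpperTriInv b') : UpperTriInv (b * b') :=
  upperTriInv_iff.2 ⟨hb.1.mul hb'.1, (upperTriInv_iff.1 hb).2.mul (upperTriInv_iff.1 hb').2⟩

lemma UpperTriInv.inv {b : Matrix (Fin n ⊕ Fin n) (Fin n ⊕ Fin n) F} (hb : UpperTriInv b) :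
    UpperTriInv b⁻¹ := by
  have := hb.1.invertible
  exact upperTriInv_iff.2 ⟨isUnit_nonsing_inv_iff.2 hb.1,
    blockTriangular_inv_of_blockTriangular (upperTriInv_iff.1 hb).2⟩

lemma UpperTriInv.toBlocks₂₁_eq_zero {b : Matrix (Fin n ⊕ Fin n) (Fin n ⊕ Fin n) F}
    (hb : UpperTriInv b) : b.toBlocks₂₁ = 0 := by
  ext i j
  exact hb.2 (Sum.inr i) (Sum.inl j) (by simp; omega)

lemma upperTriInv_fromBlocks_smul_one {c d : F} (hc : c ≠ 0) (hd : d ≠ 0)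
    (Y : Matrix (Fin n) (Fin n) F) :
    UpperTriInv (fromBlocks (c • (1 : Matrix (Fin n) (Fin n) F)) Y 0 (d • 1)) := by
  refine ⟨(isUnit_iff_isUnit_det _).2 ?_, ?_⟩
  · simp [det_fromBlocks_zero₂₁, hc, hd]
  · rintro (i | i) (j | j) hij <;> simp at hij ⊢
    · exact .inr (one_apply_ne (Fin.ne_of_gt hij))
    · omega
    · exact .inr (one_apply_ne (Fin.ne_of_gt hij))

lemma upperTriInv_iotaBlk_one_smul {ϖ : F} (hϖ0 : ϖ ≠ 0) :
    UpperTriInv (iotaBlk 1 (ϖ • (1 : Matrix (Fin n) (Fin n) F))) := by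
  simpa [iotaBlk] using upperTriInv_fromBlocks_smul_one one_ne_zero hϖ0 0

end Triangular

section Antidiagonal

variable {F : Type*} [Field F] {n : ℕ}

lemma wFull_eq_fromBlocks :
    wFull n F = fromBlocks 0 (Fin.revPerm.permMatrix F) (Fin.revPerm.permMatrix F) 0 := by
  ext (i | i) (j | j) <;> simp [wFull, PEquiv.toMatrix_apply, Fin.ext_iff]
  · exact if_neg (by omega)
  · exact if_congr (by omega) rfl rfl
  · exact if_congr (by omega) rfl rfl
  · omega

lemma permMatrix_revPerm_mul_self :
    (Fin.revPerm.permMatrix F : Matrix (Fin n) (Fin n) F) * Fin.revPerm.permMatrix F = 1 := by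
  rw [← permMatrix_mul]
  convert permMatrix_one
  ext i
  simp

lemma wFull_mul_self : wFull n F * wFull n F = 1 := by
  simp [wFull_eq_fromBlocks, fromBlocks_multiply, permMatrix_revPerm_mul_self]

lemma wFull_mul_fromBlocks_mul_wFull (A B C D : Matrix (Fin n) (Fin n) F) :
    wFull n F * fromBlocks A B C D * wFull n F =
      fromBlocks (Fin.revPerm.permMatrix F * D * Fin.revPerm.permMatrix F)
        (Fin.revPerm.permMatrix F * C * Fin.revPerm.permMatrix F)
        (Fin.revPerm.permMatrix F * B * Fin.revPerm.permMatrix F)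
        (Fin.revPerm.permMatrix F * A * Fin.revPerm.permMatrix F) := by
  simp [wFull_eq_fromBlocks, fromBlocks_multiply, Matrix.mul_assoc]

lemma wFull_mul_tMat (ϖ : F) :
    wFull n F * tMat n F ϖ = iotaBlk 1 (ϖ • (1 : Matrix (Fin n) (Fin n) F)) * wFull n F := by
  simp [wFull_eq_fromBlocks, tMat, iotaBlk, fromBlocks_multiply]

lemma exists_upperTriInv_wFull_mul_eq {c : F} (hc : c ≠ 0) (Y : Matrix (Fin n) (Fin n) F) :
    ∃ b, UpperTriInv b ∧ wFull n F * fromBlocks (c • 1) 0 Y 1 = b * wFull n F := by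
  have hb := upperTriInv_fromBlocks_smul_one one_ne_zero hc
    (Fin.revPerm.permMatrix F * Y * Fin.revPerm.permMatrix F)
  rw [one_smul] at hb
  refine ⟨_, hb, ?_⟩
  calc wFull n F * fromBlocks (c • 1) 0 Y 1
      = wFull n F * fromBlocks (c • 1) 0 Y 1 * wFull n F * wFull n F := by
        rw [Matrix.mul_assoc _ (wFull n F), wFull_mul_self, Matrix.mul_one]
    _ = _ := by
        rw [wFull_mul_fromBlocks_mul_wFull]
        simp [permMatrix_revPerm_mul_self]

end Antidiagonal

section Blocks

variable {R : Type*} [CommRing R] {m p : Type*} [Fintype m] [Fintype p]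

lemma toBlocks₁₁_mul (M N : Matrix (m ⊕ p) (m ⊕ p) R) :
    (M * N).toBlocks₁₁ = M.toBlocks₁₁ * N.toBlocks₁₁ + M.toBlocks₁₂ * N.toBlocks₂₁ := by
  ext i j
  simp [toBlocks₁₁, toBlocks₁₂, toBlocks₂₁, mul_apply, Fintype.sum_sum_type]

lemma toBlocks₁₂_mul (M N : Matrix (m ⊕ p) (m ⊕ p) R) :
    (M * N).toBlocks₁₂ = M.toBlocks₁₁ * N.toBlocks₁₂ + M.toBlocks₁₂ * N.toBlocks₂₂ := by
  ext i j
  simp [toBlocks₁₂, toBlocks₁₁, toBlocks₂₂, mul_apply, Fintype.sum_sum_type]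

lemma toBlocks₂₁_mul (M N : Matrix (m ⊕ p) (m ⊕ p) R) :
    (M * N).toBlocks₂₁ = M.toBlocks₂₁ * N.toBlocks₁₁ + M.toBlocks₂₂ * N.toBlocks₂₁ := by
  ext i j
  simp [toBlocks₂₁, toBlocks₁₁, toBlocks₂₂, mul_apply, Fintype.sum_sum_type]

variable [DecidableEq m] [DecidableEq p]

lemma isUnit_det_toBlocks₁₁_of_le_jacobson {I : Ideal R} (hI : I ≤ (⊥ : Ideal R).jacobson)
    {K : Matrix (m ⊕ p) (m ⊕ p) R} (hK : IsUnit K.det) (hK₂₁ : ∀ i j, K.toBlocks₂₁ i j ∈ I) :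
    IsUnit K.toBlocks₁₁.det := by
  have := isLocalHom_of_le_jacobson_bot I hI
  have hK₂₁' : K.toBlocks₂₁.map (Ideal.Quotient.mk I) = 0 := by
    ext i j
    exact Ideal.Quotient.eq_zero_iff_mem.2 (hK₂₁ i j)
  -- modulo `I` the matrix is block upper triangular
  have hdet : Ideal.Quotient.mk I K.det =
      Ideal.Quotient.mk I K.toBlocks₁₁.det * Ideal.Quotient.mk I K.toBlocks₂₂.det := by
    simp only [RingHom.map_det, RingHom.mapMatrix_apply]
    conv_lhs => rw [← fromBlocks_toBlocks K]
    rw [fromBlocks_map, hK₂₁', det_fromBlocks_zero₂₁]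
  exact (isUnit_map_iff (Ideal.Quotient.mk I) _).1
    (isUnit_of_mul_isUnit_left (hdet ▸ hK.map _))

end Blocks

section Parahoric

variable {F : Type*} [Field F] {O : Subring F} {ϖ : F} {n : ℕ}

lemma inGLOS_iff {g : Matrix (Fin n ⊕ Fin n) (Fin n ⊕ Fin n) F} :
    inGLOS O g ↔ g ∈ O.matrix ∧ g.det ≠ 0 ∧ g.det⁻¹ ∈ O := by
  constructor
  · rintro ⟨g', hgg', -, hg, hg'⟩
    have hdet : g.det * g'.det = 1 := by rw [← det_mul, hgg', det_one]
    refine ⟨hg, left_ne_zero_of_mul_eq_one hdet, ?_⟩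
    rw [inv_eq_of_mul_eq_one_right hdet]
    exact det_mem_of_mem_matrix hg'
  · rintro ⟨hg, hdet, hdetinv⟩
    have hunit := isUnit_iff_ne_zero.2 hdet
    exact ⟨g⁻¹, mul_nonsing_inv g hunit, nonsing_inv_mul g hunit, hg,
      nonsing_inv_mem_matrix hg hdetinv⟩

lemma inParahoricS_iff {k : Matrix (Fin n ⊕ Fin n) (Fin n ⊕ Fin n) F} :
    inParahoricS O ϖ k ↔ inGLOS O k ∧ k.toBlocks₂₁ ∈ ϖ • (O : Set F).matrix := by
  rw [mem_smul_matrix_iff]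
  rfl

lemma inParahoricS.mem_matrix {k : Matrix (Fin n ⊕ Fin n) (Fin n ⊕ Fin n) F}
    (hk : inParahoricS O ϖ k) : k ∈ O.matrix :=
  (inGLOS_iff.1 hk.1).1

lemma inParahoricS_of_det_eq {M k : Matrix (Fin n ⊕ Fin n) (Fin n ⊕ Fin n) F}
    (hM : M ∈ O.matrix) (hM₂₁ : M.toBlocks₂₁ ∈ ϖ • (O : Set F).matrix) (hk : inGLOS O k)
    (hdet : M.det = k.det) : inParahoricS O ϖ M := by
  obtain ⟨-, hk0, hkinv⟩ := inGLOS_iff.1 hk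
  exact inParahoricS_iff.2 ⟨inGLOS_iff.2 ⟨hM, hdet ▸ hk0, hdet ▸ hkinv⟩, hM₂₁⟩

lemma inParahoricS.mul {k k' : Matrix (Fin n ⊕ Fin n) (Fin n ⊕ Fin n) F}
    (hk : inParahoricS O ϖ k) (hk' : inParahoricS O ϖ k') : inParahoricS O ϖ (k * k') := by
  obtain ⟨hkO, hk0, hkinv⟩ := inGLOS_iff.1 hk.1
  obtain ⟨hk'O, hk'0, hk'inv⟩ := inGLOS_iff.1 hk'.1
  obtain ⟨C, hC, hkC⟩ := mem_smul_matrix.1 (inParahoricS_iff.1 hk).2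
  obtain ⟨C', hC', hk'C⟩ := mem_smul_matrix.1 (inParahoricS_iff.1 hk').2
  refine inParahoricS_iff.2 ⟨inGLOS_iff.2 ⟨mul_mem hkO hk'O, ?_, ?_⟩, mem_smul_matrix.2
    ⟨C * k'.toBlocks₁₁ + k.toBlocks₂₂ * C',
      add_mem (mul_mem hC (toBlocks_mem_matrix hk'O).1)
        (mul_mem (toBlocks_mem_matrix hkO).2.2.2 hC'), ?_⟩⟩
  · rw [det_mul]
    exact mul_ne_zero hk0 hk'0
  · rw [det_mul, mul_inv]
    exact mul_mem hkinv hk'inv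
  · rw [toBlocks₂₁_mul, ← hkC, ← hk'C, smul_add, Matrix.smul_mul, Matrix.mul_smul]

lemma inParahoricS_fromBlocks_one_zero_one {X : Matrix (Fin n) (Fin n) F} (hX : X ∈ O.matrix) :
    inParahoricS O ϖ (fromBlocks 1 X 0 1) := by
  refine inParahoricS_iff.2 ⟨inGLOS_iff.2 ⟨fromBlocks_mem_matrix (one_mem _) hX (zero_mem _)
    (one_mem _), ?_⟩, mem_smul_matrix.2 ⟨0, zero_mem _, by simp⟩⟩
  simp [one_mem]

lemma inParahoricS.isUnit_det_toBlocks₁₁ (hϖO : ϖ ∈ O)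
    (hϖJ : (⟨ϖ, hϖO⟩ : O) ∈ (⊥ : Ideal O).jacobson)
    {k : Matrix (Fin n ⊕ Fin n) (Fin n ⊕ Fin n) F} (hk : inParahoricS O ϖ k) :
    IsUnit k.toBlocks₁₁.det ∧ k.toBlocks₁₁⁻¹ ∈ O.matrix := by
  obtain ⟨hkO, hk0, hkinv⟩ := inGLOS_iff.1 hk.1
  obtain ⟨K, rfl⟩ := exists_map_subtype_eq hkO
  rw [det_map_subtype] at hk0 hkinv
  have hK₂₁ : ∀ i j, K.toBlocks₂₁ i j ∈ Ideal.span {(⟨ϖ, hϖO⟩ : O)} := fun i j => by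
    obtain ⟨c, hc, hkc⟩ := hk.2 i j
    exact Ideal.mem_span_singleton'.2 ⟨⟨c, hc⟩, Subtype.ext (by rw [mul_comm]; exact hkc.symm)⟩
  have hA := isUnit_det_toBlocks₁₁_of_le_jacobson ((Ideal.span_singleton_le_iff_mem _).2 hϖJ)
    (isUnit_iff_inv_mem.2 ⟨hk0, hkinv⟩) hK₂₁
  obtain ⟨hA0, hAinv⟩ := isUnit_iff_inv_mem.1 hA
  have hA' : (K.map O.subtype).toBlocks₁₁ = K.toBlocks₁₁.map O.subtype := rfl
  rw [hA', det_map_subtype]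
  exact ⟨isUnit_iff_ne_zero.2 hA0,
    nonsing_inv_mem_matrix (fun i j => (K.toBlocks₁₁ i j).2) (by rwa [det_map_subtype])⟩

end Parahoric

section Hecke

variable {F : Type*} [Field F] {O : Subring F} {ϖ : F} {n : ℕ}

lemma fromBlocks_mul_tMat (A B C D : Matrix (Fin n) (Fin n) F) :
    fromBlocks A B C D * tMat n F ϖ = fromBlocks (ϖ • A) B (ϖ • C) D := by
  simp [tMat, iotaBlk, fromBlocks_multiply]

lemma tMat_mul_fromBlocks (A B C D : Matrix (Fin n) (Fin n) F) :
    tMat n F ϖ * fromBlocks A B C D = fromBlocks (ϖ • A) (ϖ • B) C D := by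
  simp [tMat, iotaBlk, fromBlocks_multiply]

lemma det_tMat : (tMat n F ϖ).det = ϖ ^ n := by
  simp [tMat, iotaBlk]

lemma tMat_mul_fromBlocks_inv (hϖ0 : ϖ ≠ 0) :
    tMat n F ϖ * fromBlocks (ϖ⁻¹ • 1) 0 0 1 = 1 := by
  rw [tMat_mul_fromBlocks, smul_smul, mul_inv_cancel₀ hϖ0, one_smul, smul_zero, fromBlocks_one]

lemma exists_parahoric_mul_tMat_eq (hϖO : ϖ ∈ O) (hϖ0 : ϖ ≠ 0)
    {k : Matrix (Fin n ⊕ Fin n) (Fin n ⊕ Fin n) F} (hk : inParahoricS O ϖ k)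
    (hk₁₂ : k.toBlocks₁₂ ∈ ϖ • (O : Set F).matrix) :
    ∃ k₁, inParahoricS O ϖ k₁ ∧ k * tMat n F ϖ = tMat n F ϖ * k₁ := by
  obtain ⟨Z, hZ, hkZ⟩ := mem_smul_matrix.1 hk₁₂
  obtain ⟨hA, -, hC, hD⟩ := toBlocks_mem_matrix hk.mem_matrix
  have heq : k * tMat n F ϖ =
      tMat n F ϖ * fromBlocks k.toBlocks₁₁ Z (ϖ • k.toBlocks₂₁) k.toBlocks₂₂ := by
    rw [tMat_mul_fromBlocks, hkZ]
    conv_lhs => rw [← fromBlocks_toBlocks k]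
    rw [fromBlocks_mul_tMat]
  refine ⟨_, inParahoricS_of_det_eq (fromBlocks_mem_matrix hA hZ (smul_mem_matrix hϖO hC) hD)
    ?_ hk.1 ?_, heq⟩
  · rw [toBlocks_fromBlocks₂₁]
    exact Set.smul_mem_smul_set hC
  · have := congrArg det heq
    rw [det_mul, det_mul, mul_comm, det_tMat] at this
    exact (mul_left_cancel₀ (pow_ne_zero n hϖ0) this).symm

lemma exists_lower_mul_parahoric (hϖO : ϖ ∈ O) (hϖ0 : ϖ ≠ 0)
    (hϖJ : (⟨ϖ, hϖO⟩ : O) ∈ (⊥ : Ideal O).jacobson)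
    {k : Matrix (Fin n ⊕ Fin n) (Fin n ⊕ Fin n) F} (hk : inParahoricS O ϖ k) :
    ∃ Y κ, inParahoricS O ϖ κ ∧
      k * fromBlocks (ϖ⁻¹ • 1) 0 0 1 = fromBlocks (ϖ⁻¹ • 1) 0 Y 1 * κ := by
  obtain ⟨hAu, hAinv⟩ := hk.isUnit_det_toBlocks₁₁ hϖO hϖJ
  obtain ⟨hA, hB, -, hD⟩ := toBlocks_mem_matrix hk.mem_matrix
  obtain ⟨C, hC, hkC⟩ := mem_smul_matrix.1 (inParahoricS_iff.1 hk).2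
  set A := k.toBlocks₁₁
  set B := k.toBlocks₁₂
  set D := k.toBlocks₂₂
  have hk_eq : k = fromBlocks A B (ϖ • C) D := by
    rw [hkC]
    exact (fromBlocks_toBlocks k).symm
  refine ⟨C * A⁻¹, fromBlocks A (ϖ • B) 0 (D - ϖ • (C * A⁻¹ * B)), inParahoricS_of_det_eq
    (fromBlocks_mem_matrix hA (smul_mem_matrix hϖO hB) (zero_mem _)
      (sub_mem hD (smul_mem_matrix hϖO (mul_mem (mul_mem hC hAinv) hB))))
    (by rw [toBlocks_fromBlocks₂₁]; exact mem_smul_matrix.2 ⟨0, zero_mem _, smul_zero ϖ⟩)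
    hk.1 ?_, ?_⟩
  · have := invertibleOfIsUnitDet A hAu
    rw [det_fromBlocks_zero₂₁, hk_eq, det_fromBlocks₁₁, invOf_eq_nonsing_inv, Matrix.smul_mul,
      Matrix.smul_mul]
  · rw [hk_eq, fromBlocks_multiply, fromBlocks_multiply]
    congr 1 <;> simp [smul_smul, inv_mul_cancel₀ hϖ0, mul_inv_cancel₀ hϖ0, Matrix.mul_assoc,
      nonsing_inv_mul A hAu]

end Hecke

section Representatives

variable {F : Type*} [Field F] {O : Subring F} {ι : Type*} [Fintype ι] [DecidableEq ι]

lemma exists_mem_rep_iff {π : O} {Rep : Finset (Matrix ι ι O)}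
    (hRep : ∀ X : Matrix ι ι O, ∃! r, r ∈ Rep ∧ ∀ i j, ∃ c : O, X i j - r i j = π * c)
    {X : Matrix ι ι F} (hX : X ∈ O.matrix) :
    ∃ r ∈ Rep, ∀ m ∈ Rep,
      (X - m.map (fun x : O => (x : F)) ∈ (π : F) • (O : Set F).matrix ↔ m = r) := by
  obtain ⟨N, rfl⟩ := exists_map_subtype_eq hX
  obtain ⟨r, ⟨hr, hNr⟩, hr_uniq⟩ := hRep N
  have key : ∀ m : Matrix ι ι O, N.map O.subtype - m.map (fun x : O => (x : F)) ∈
      (π : F) • (O : Set F).matrix ↔ ∀ i j, ∃ c : O, N i j - m i j = π * c := by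
    intro m
    simp [mem_smul_matrix_iff, Subtype.ext_iff]
  exact ⟨r, hr, fun m hm => (key m).trans ⟨fun h => hr_uniq m ⟨hm, h⟩, fun h => h ▸ hNr⟩⟩

end Representatives

section BruhatCell

variable {F : Type*} [Field F] {O : Subring F} {ϖ : F} {n : ℕ}

def InBruhatCell (O : Subring F) (ϖ : F) (g : Matrix (Fin n ⊕ Fin n) (Fin n ⊕ Fin n) F) :
    Prop :=
  ∃ b k, UpperTriInv b ∧ inParahoricS O ϖ k ∧ g = b * wFull n F * k

lemma InBruhatCell.mul_parahoric {g k : Matrix (Fin n ⊕ Fin n) (Fin n ⊕ Fin n) F}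
    (hg : InBruhatCell O ϖ g) (hk : inParahoricS O ϖ k) : InBruhatCell O ϖ (g * k) := by
  obtain ⟨b, k', hb, hk', rfl⟩ := hg
  exact ⟨b, k' * k, hb, hk'.mul hk, by simp only [Matrix.mul_assoc]⟩

lemma InBruhatCell.of_mul_tMat (hϖO : ϖ ∈ O) (hϖ0 : ϖ ≠ 0)
    (hϖJ : (⟨ϖ, hϖO⟩ : O) ∈ (⊥ : Ideal O).jacobson)
    {g : Matrix (Fin n ⊕ Fin n) (Fin n ⊕ Fin n) F} (h : InBruhatCell O ϖ (g * tMat n F ϖ)) :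
    InBruhatCell O ϖ g := by
  obtain ⟨b, k, hb, hk, hgt⟩ := h
  obtain ⟨Y, κ, hκ, hkY⟩ := exists_lower_mul_parahoric hϖO hϖ0 hϖJ hk
  obtain ⟨b', hb', hwY⟩ := exists_upperTriInv_wFull_mul_eq (inv_ne_zero hϖ0) Y
  refine ⟨b * b', κ, hb.mul hb', hκ, ?_⟩
  calc g = g * tMat n F ϖ * fromBlocks (ϖ⁻¹ • 1) 0 0 1 := by
        rw [Matrix.mul_assoc, tMat_mul_fromBlocks_inv hϖ0, Matrix.mul_one]
    _ = b * (wFull n F * fromBlocks (ϖ⁻¹ • 1) 0 Y 1) * κ := by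
        rw [hgt, Matrix.mul_assoc (b * wFull n F), hkY]
        simp only [Matrix.mul_assoc]
    _ = b * b' * wFull n F * κ := by
        rw [hwY]
        simp only [Matrix.mul_assoc]

lemma InBruhatCell.of_mul_unipotent_mul_tMat (hϖO : ϖ ∈ O) (hϖ0 : ϖ ≠ 0)
    (hϖJ : (⟨ϖ, hϖO⟩ : O) ∈ (⊥ : Ideal O).jacobson)
    {g : Matrix (Fin n ⊕ Fin n) (Fin n ⊕ Fin n) F} {X : Matrix (Fin n) (Fin n) F}
    (hX : X ∈ O.matrix) (h : InBruhatCell O ϖ (g * fromBlocks 1 X 0 1 * tMat n F ϖ)) :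
    InBruhatCell O ϖ g := by
  simpa [Matrix.mul_assoc, fromBlocks_multiply] using (h.of_mul_tMat hϖO hϖ0 hϖJ).mul_parahoric
    (inParahoricS_fromBlocks_one_zero_one (neg_mem hX))

lemma exists_rep_toBlocks₁₂_mul_mem_iff (hϖO : ϖ ∈ O)
    (hϖJ : (⟨ϖ, hϖO⟩ : O) ∈ (⊥ : Ideal O).jacobson)
    {k : Matrix (Fin n ⊕ Fin n) (Fin n ⊕ Fin n) F} (hk : inParahoricS O ϖ k)
    {Rep : Finset (Matrix (Fin n) (Fin n) O)}
    (hRep : ∀ X : Matrix (Fin n) (Fin n) O,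
      ∃! r, r ∈ Rep ∧ ∀ i j, ∃ c : O, X i j - r i j = (⟨ϖ, hϖO⟩ : O) * c) :
    ∃ r ∈ Rep, ∀ m ∈ Rep, ((k * fromBlocks 1 (m.map (fun x : O => (x : F))) 0 1).toBlocks₁₂ ∈
      ϖ • (O : Set F).matrix ↔ m = r) := by
  obtain ⟨hAu, hAinv⟩ := hk.isUnit_det_toBlocks₁₁ hϖO hϖJ
  obtain ⟨hA, hB, -, -⟩ := toBlocks_mem_matrix hk.mem_matrix
  obtain ⟨r, hr, hr_iff⟩ := exists_mem_rep_iff hRep (neg_mem (mul_mem hAinv hB))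
  refine ⟨r, hr, fun m hm => ?_⟩
  rw [← hr_iff m hm, toBlocks₁₂_mul, toBlocks_fromBlocks₁₂, toBlocks_fromBlocks₂₂, Matrix.mul_one]
  exact mul_add_mem_smul_matrix_iff hAu hA hAinv

lemma toBlocks₁₂_mem_of_mul_tMat_eq (hϖO : ϖ ∈ O)
    (hϖJ : (⟨ϖ, hϖO⟩ : O) ∈ (⊥ : Ideal O).jacobson)
    {M Λ k : Matrix (Fin n ⊕ Fin n) (Fin n ⊕ Fin n) F} (hM : M ∈ O.matrix)
    (hΛ : Λ.toBlocks₁₂ = 0) (hk : inParahoricS O ϖ k) (h : M * tMat n F ϖ = Λ * k) :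
    M.toBlocks₁₂ ∈ ϖ • (O : Set F).matrix := by
  obtain ⟨hAu, hAinv⟩ := hk.isUnit_det_toBlocks₁₁ hϖO hϖJ
  obtain ⟨-, hB, -, -⟩ := toBlocks_mem_matrix hk.mem_matrix
  have hMt : M * tMat n F ϖ = fromBlocks (ϖ • M.toBlocks₁₁) M.toBlocks₁₂
      (ϖ • M.toBlocks₂₁) M.toBlocks₂₂ := by
    conv_lhs => rw [← fromBlocks_toBlocks M]
    exact fromBlocks_mul_tMat _ _ _ _
  have h₁₁ := congrArg toBlocks₁₁ h
  have h₁₂ := congrArg toBlocks₁₂ h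
  rw [hMt, toBlocks_fromBlocks₁₁, toBlocks₁₁_mul, hΛ, Matrix.zero_mul, add_zero] at h₁₁
  rw [hMt, toBlocks_fromBlocks₁₂, toBlocks₁₂_mul, hΛ, Matrix.zero_mul, add_zero] at h₁₂
  have hΛ₁₁ : Λ.toBlocks₁₁ = ϖ • (M.toBlocks₁₁ * k.toBlocks₁₁⁻¹) := by
    rw [← Matrix.smul_mul, h₁₁, Matrix.mul_assoc, mul_nonsing_inv _ hAu, Matrix.mul_one]
  rw [h₁₂, hΛ₁₁, Matrix.smul_mul]
  exact Set.smul_mem_smul_set (mul_mem (mul_mem (toBlocks_mem_matrix hM).1 hAinv) hB)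

lemma toBlocks₁₂_mem_of_inBruhatCell (hϖO : ϖ ∈ O)
    (hϖJ : (⟨ϖ, hϖO⟩ : O) ∈ (⊥ : Ideal O).jacobson)
    {b M : Matrix (Fin n ⊕ Fin n) (Fin n ⊕ Fin n) F} (hb : UpperTriInv b) (hM : M ∈ O.matrix)
    (h : InBruhatCell O ϖ (b * wFull n F * M * tMat n F ϖ)) :
    M.toBlocks₁₂ ∈ ϖ • (O : Set F).matrix := by
  obtain ⟨b₂, k₂, hb₂, hk₂, heq⟩ := h
  refine toBlocks₁₂_mem_of_mul_tMat_eq hϖO hϖJ hM (Λ := wFull n F * (b⁻¹ * b₂) * wFull n F)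
    ?_ hk₂ ?_
  · -- conjugation by `w` moves the vanishing lower-left block of `b⁻¹ b₂` to the upper right
    rw [← fromBlocks_toBlocks (b⁻¹ * b₂), wFull_mul_fromBlocks_mul_wFull, toBlocks_fromBlocks₁₂,
      (hb.inv.mul hb₂).toBlocks₂₁_eq_zero, Matrix.mul_zero, Matrix.zero_mul]
  · calc M * tMat n F ϖ = wFull n F * (b⁻¹ * b) * wFull n F * M * tMat n F ϖ := by
          rw [nonsing_inv_mul b ((isUnit_iff_isUnit_det b).1 hb.1), Matrix.mul_one,
            wFull_mul_self, Matrix.one_mul]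
      _ = wFull n F * b⁻¹ * (b * wFull n F * M * tMat n F ϖ) := by
          simp only [Matrix.mul_assoc]
      _ = wFull n F * (b⁻¹ * b₂) * wFull n F * k₂ := by
          rw [heq]
          simp only [Matrix.mul_assoc]

end BruhatCell

theorem statement11_general
    (F : Type*) [Field F] (O : Subring F) (ϖ : F) (hϖO : ϖ ∈ O) (hϖ0 : ϖ ≠ 0)
    (v : F → ℤ)
    (hv_mul : ∀ x y : F, x ≠ 0 → y ≠ 0 → v (x * y) = v x + v y)
    (hv_ϖ : v ϖ = 1)
    (hv_O : ∀ x : F, x ≠ 0 → (x ∈ O ↔ 0 ≤ v x))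
    (n : ℕ)
    (χ : Matrix (Fin n ⊕ Fin n) (Fin n ⊕ Fin n) F → ℂ)
    (hχ_mul : ∀ b b', UpperTriInv b → UpperTriInv b' → χ (b * b') = χ b * χ b')
    (f : Matrix (Fin n ⊕ Fin n) (Fin n ⊕ Fin n) F → ℂ)
    (hf_eq : ∀ b g k, UpperTriInv b → inParahoricS O ϖ k → f (b * g * k) = χ b * f g)
    (hf_supp : ∀ g, (¬ ∃ b k, UpperTriInv b ∧ inParahoricS O ϖ k ∧
      g = b * wFull n F * k) → f g = 0)
    (Rep : Finset (Matrix (Fin n) (Fin n) O))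
    (hRep : ∀ X : Matrix (Fin n) (Fin n) O,
      ∃! r, r ∈ Rep ∧ ∀ i j : Fin n, ∃ c : O, X i j - r i j = (⟨ϖ, hϖO⟩ : O) * c)
    (g : Matrix (Fin n ⊕ Fin n) (Fin n ⊕ Fin n) F) :
    ∑ m ∈ Rep, f (g * Matrix.fromBlocks 1 (m.map (fun x : O => (x : F))) 0 1 * tMat n F ϖ)
      = χ (iotaBlk 1 (ϖ • (1 : Matrix (Fin n) (Fin n) F))) * f g := by
  have hϖJ := mem_jacobson_bot_of_valuation hϖO hϖ0 hv_mul hv_ϖ hv_O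
  have hu (m : Matrix (Fin n) (Fin n) O) :
      inParahoricS O ϖ (fromBlocks 1 (m.map (fun x : O => (x : F))) 0 1) :=
    inParahoricS_fromBlocks_one_zero_one fun i j => (m i j).2
  by_cases hg : InBruhatCell O ϖ g
  swap
  · rw [hf_supp g hg, mul_zero]
    exact Finset.sum_eq_zero fun m _ => hf_supp _ fun h =>
      hg (InBruhatCell.of_mul_unipotent_mul_tMat hϖO hϖ0 hϖJ (fun i j => (m i j).2) h)
  obtain ⟨b, k, hb, hk, rfl⟩ := hg
  obtain ⟨r, hr, hcong⟩ := exists_rep_toBlocks₁₂_mul_mem_iff hϖO hϖJ hk hRep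
  rw [Finset.sum_eq_single_of_mem r hr fun m hm hmr => hf_supp _ fun h => hmr ((hcong m hm).1
    (toBlocks₁₂_mem_of_inBruhatCell hϖO hϖJ hb (hk.mul (hu m)).mem_matrix
      (by rwa [← Matrix.mul_assoc (b * wFull n F) k])))]
  obtain ⟨k₁, hk₁, hkt⟩ := exists_parahoric_mul_tMat_eq hϖO hϖ0 (hk.mul (hu r)) ((hcong r hr).2 rfl)
  have hι := upperTriInv_iotaBlk_one_smul (n := n) hϖ0
  have hgt : b * wFull n F * k * fromBlocks 1 (r.map (fun x : O => (x : F))) 0 1 * tMat n F ϖ =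
      b * iotaBlk 1 (ϖ • 1) * wFull n F * k₁ := by
    simp only [Matrix.mul_assoc] at hkt ⊢
    rw [hkt, ← Matrix.mul_assoc (wFull n F), wFull_mul_tMat, Matrix.mul_assoc]
  rw [hgt, hf_eq _ _ _ (hb.mul hι) hk₁, hf_eq _ _ _ hb hk, hχ_mul _ _ hb hι]
  ring

/-- A function `f` transforming by `χ` under `B(F)` on the left and invariant under `J` on
the right, supported on the Bruhat cell `B(F)·w·J`, is an eigenvector of the Hecke operator
`U = [J t J]`: summing the translates of `f` over coset representatives of `M_n(O)/ϖM_n(O)`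
gives `χ(ι(1, ϖ·1))·f`. -/
theorem statement11
    (F : Type*) [Field F] (O : Subring F) (ϖ : F) (hϖO : ϖ ∈ O) (hϖ0 : ϖ ≠ 0)
    (v : F → ℤ)
    (hv_mul : ∀ x y : F, x ≠ 0 → y ≠ 0 → v (x * y) = v x + v y)
    (hv_ϖ : v ϖ = 1)
    (hv_O : ∀ x : F, x ≠ 0 → (x ∈ O ↔ 0 ≤ v x))
    (n : ℕ) (hn : 1 ≤ n)
    (χ : Matrix (Fin n ⊕ Fin n) (Fin n ⊕ Fin n) F → ℂ)
    (hχ_mul : ∀ b b', UpperTriInv b → UpperTriInv b' → χ (b * b') = χ b * χ b')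
    (hχ_triv : ∀ b, UpperTriInv b → inGLOS O b → χ b = 1)
    (f : Matrix (Fin n ⊕ Fin n) (Fin n ⊕ Fin n) F → ℂ)
    (hf_eq : ∀ b g k, UpperTriInv b → inParahoricS O ϖ k → f (b * g * k) = χ b * f g)
    (hf_supp : ∀ g, (¬ ∃ b k, UpperTriInv b ∧ inParahoricS O ϖ k ∧
      g = b * wFull n F * k) → f g = 0)
    (Rep : Finset (Matrix (Fin n) (Fin n) O))
    (hRep : ∀ X : Matrix (Fin n) (Fin n) O,
      ∃! r, r ∈ Rep ∧ ∀ i j : Fin n, ∃ c : O, X i j - r i j = (⟨ϖ, hϖO⟩ : O) * c)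
    (g : Matrix (Fin n ⊕ Fin n) (Fin n ⊕ Fin n) F) :
    ∑ m ∈ Rep, f (g * Matrix.fromBlocks 1 (m.map (fun x : O => (x : F))) 0 1 * tMat n F ϖ)
      = χ (iotaBlk 1 (ϖ • (1 : Matrix (Fin n) (Fin n) F))) * f g :=
  statement11_general F O ϖ hϖO hϖ0 v hv_mul hv_ϖ hv_O n χ hχ_mul f hf_eq hf_supp Rep hRep g
end
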